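/- Let G = (V,E) be a finite connected simple graph with edge lengths l : E → ℝ≥0 and shortest-path metric d, and let P, Q ⊆ V be nonempty subsets. Let l' : E → ℝ≥0 be defined by l'(e) = 0 if both endpoints of e lie in P or both endpoints of e lie in Q, and l'(e) = l(e) otherwise; let d' be the shortest-path pseudometric with respect to l'. Then for all s, t ∈ V, d'(s,t) ≥ min{ d(s,t), d(s,P) + d(P,t), d(s,Q) + d(Q,t), d(s,P) + d(Q,t), d(s,Q) + d(P,t) }, where d(x,A) = min_{a ∈ A} d(x,a). -/
import Mathlib


open scoped Classical

/-- Length of a walk with respect to edge lengths `l`. -/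
noncomputable def walkLen {V : Type*} {G : SimpleGraph V} (l : Sym2 V → ℝ) {u v : V}
    (p : G.Walk u v) : ℝ :=
  (p.edges.map l).sum

/-- Shortest-path distance in `G` with respect to edge lengths `l`. -/
noncomputable def spDist {V : Type*} (G : SimpleGraph V) (l : Sym2 V → ℝ) (u v : V) : ℝ :=
  sInf {x | ∃ p : G.Walk u v, walkLen l p = x}

/-- `K` is a minor of `G`: disjoint nonempty connected branch sets in `G`, one for each
vertex of `K`, with an edge of `G` between the branch sets of any two adjacent vertices. -/
def IsMinorOf {W V : Type*} (K : SimpleGraph W) (G : SimpleGraph V) : Prop :=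
  ∃ f : W → Set V,
    (∀ w, (f w).Nonempty) ∧
    (∀ w, (G.induce (f w)).Connected) ∧
    (∀ w₁ w₂, w₁ ≠ w₂ → Disjoint (f w₁) (f w₂)) ∧
    (∀ w₁ w₂, K.Adj w₁ w₂ → ∃ u ∈ f w₁, ∃ v ∈ f w₂, G.Adj u v)

/-- The ℓ₁ distance between two points of `ℝ^m`. -/
noncomputable def l1dist {m : ℕ} (x y : Fin m → ℝ) : ℝ := ∑ i, |x i - y i|

/-- `d(x,A) = min_{a ∈ A} d(x,a)`: shortest-path distance from a vertex to a set. -/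
noncomputable def spDistToSet {V : Type*} (G : SimpleGraph V) (l : Sym2 V → ℝ)
    (x : V) (A : Set V) : ℝ :=
  sInf {r | ∃ a ∈ A, spDist G l x a = r}

/-- `d(A,x) = min_{a ∈ A} d(a,x)`: shortest-path distance from a set to a vertex. -/
noncomputable def spDistFromSet {V : Type*} (G : SimpleGraph V) (l : Sym2 V → ℝ)
    (A : Set V) (x : V) : ℝ :=
  sInf {r | ∃ a ∈ A, spDist G l a x = r}

section Aux
variable {V : Type*} {G : SimpleGraph V} {l : Sym2 V → ℝ}

lemma walkLen_nonneg (hl : ∀ e ∈ G.edgeSet, 0 ≤ l e) {u v : V} (p : G.Walk u v) :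
    0 ≤ walkLen l p := by
  apply List.sum_nonneg
  intro x hx
  simp only [List.mem_map] at hx
  obtain ⟨e, he, rfl⟩ := hx
  exact hl e (p.edges_subset_edgeSet he)

lemma walkLen_cons {u v w : V} (h : G.Adj u v) (p : G.Walk v w) :
    walkLen l (SimpleGraph.Walk.cons h p) = l s(u, v) + walkLen l p := by
  simp [walkLen]

lemma spDist_bdd (hl : ∀ e ∈ G.edgeSet, 0 ≤ l e) (u v : V) :
    BddBelow {x | ∃ p : G.Walk u v, walkLen l p = x} :=
  ⟨0, fun _ ⟨p, hp⟩ => hp ▸ walkLen_nonneg hl p⟩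

lemma spDist_le (hl : ∀ e ∈ G.edgeSet, 0 ≤ l e) {u v : V} (p : G.Walk u v) :
    spDist G l u v ≤ walkLen l p :=
  csInf_le (spDist_bdd hl u v) ⟨p, rfl⟩

lemma spDist_nonneg (hl : ∀ e ∈ G.edgeSet, 0 ≤ l e) (hG : G.Connected) (u v : V) :
    0 ≤ spDist G l u v := by
  obtain ⟨p⟩ := hG.preconnected u v
  exact le_csInf ⟨walkLen l p, p, rfl⟩ (fun x ⟨q, hq⟩ => hq ▸ walkLen_nonneg hl q)

lemma spDist_self_le (hl : ∀ e ∈ G.edgeSet, 0 ≤ l e) (u : V) : spDist G l u u ≤ 0 :=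
  spDist_le hl SimpleGraph.Walk.nil

lemma spDist_cons_le (hl : ∀ e ∈ G.edgeSet, 0 ≤ l e) (hG : G.Connected) {u v : V} (t : V)
    (h : G.Adj u v) : spDist G l u t ≤ l s(u, v) + spDist G l v t := by
  obtain ⟨q⟩ := hG.preconnected v t
  have h1 : spDist G l u t - l s(u, v) ≤ spDist G l v t := by
    refine le_csInf ⟨_, q, rfl⟩ ?_
    rintro x ⟨p, rfl⟩
    have := spDist_le hl (SimpleGraph.Walk.cons h p)
    rw [walkLen_cons] at this
    linarith
  linarith

lemma spDistToSet_bdd (hl : ∀ e ∈ G.edgeSet, 0 ≤ l e) (hG : G.Connected) (x : V) (A : Set V) :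
    BddBelow {r | ∃ a ∈ A, spDist G l x a = r} :=
  ⟨0, fun _ ⟨a, _, ha⟩ => ha ▸ spDist_nonneg hl hG x a⟩

lemma spDistFromSet_bdd (hl : ∀ e ∈ G.edgeSet, 0 ≤ l e) (hG : G.Connected) (A : Set V) (x : V) :
    BddBelow {r | ∃ a ∈ A, spDist G l a x = r} :=
  ⟨0, fun _ ⟨a, _, ha⟩ => ha ▸ spDist_nonneg hl hG a x⟩

lemma spDistToSet_nonneg (hl : ∀ e ∈ G.edgeSet, 0 ≤ l e) (hG : G.Connected) (x : V)
    {A : Set V} (hA : A.Nonempty) : 0 ≤ spDistToSet G l x A := by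
  obtain ⟨a, ha⟩ := hA
  exact le_csInf ⟨spDist G l x a, a, ha, rfl⟩ (fun r ⟨b, _, hb⟩ => hb ▸ spDist_nonneg hl hG x b)

lemma spDistFromSet_nonneg (hl : ∀ e ∈ G.edgeSet, 0 ≤ l e) (hG : G.Connected) (x : V)
    {A : Set V} (hA : A.Nonempty) : 0 ≤ spDistFromSet G l A x := by
  obtain ⟨a, ha⟩ := hA
  exact le_csInf ⟨spDist G l a x, a, ha, rfl⟩ (fun r ⟨b, _, hb⟩ => hb ▸ spDist_nonneg hl hG b x)

lemma spDistToSet_le_zero (hl : ∀ e ∈ G.edgeSet, 0 ≤ l e) (hG : G.Connected) {x : V}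
    {A : Set V} (hx : x ∈ A) : spDistToSet G l x A ≤ 0 :=
  le_trans (csInf_le (spDistToSet_bdd hl hG x A) ⟨x, hx, rfl⟩) (spDist_self_le hl x)

lemma spDistFromSet_le (hl : ∀ e ∈ G.edgeSet, 0 ≤ l e) (hG : G.Connected) {u : V}
    {A : Set V} (hu : u ∈ A) (t : V) : spDistFromSet G l A t ≤ spDist G l u t :=
  csInf_le (spDistFromSet_bdd hl hG A t) ⟨u, hu, rfl⟩

lemma spDistToSet_cons_le (hl : ∀ e ∈ G.edgeSet, 0 ≤ l e) (hG : G.Connected) {u v : V}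
    (h : G.Adj u v) {A : Set V} (hA : A.Nonempty) :
    spDistToSet G l u A ≤ l s(u, v) + spDistToSet G l v A := by
  obtain ⟨a, ha⟩ := hA
  have h1 : spDistToSet G l u A - l s(u, v) ≤ spDistToSet G l v A := by
    refine le_csInf ⟨_, a, ha, rfl⟩ ?_
    rintro r ⟨b, hb, rfl⟩
    have h2 : spDistToSet G l u A ≤ spDist G l u b :=
      csInf_le (spDistToSet_bdd hl hG u A) ⟨b, hb, rfl⟩
    have h3 := spDist_cons_le hl hG b h
    linarith
  linarith

end Aux

/-- Lower bound on the shortest-path pseudometric `d'` obtained by contracting to length `0`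
all edges inside `P` and all edges inside `Q`: any `s`–`t` path either avoids both sets or
must pay the distance to enter and leave them, so
`d'(s,t) ≥ min{d(s,t), d(s,P)+d(P,t), d(s,Q)+d(Q,t), d(s,P)+d(Q,t), d(s,Q)+d(P,t)}`. -/
theorem stmt7 {V : Type*} [Fintype V] (G : SimpleGraph V) (hG : G.Connected)
    (l : Sym2 V → ℝ) (hl : ∀ e, 0 ≤ l e)
    (P Q : Set V) (hPne : P.Nonempty) (hQne : Q.Nonempty)
    (l' : Sym2 V → ℝ)
    (hl' : ∀ u w : V, G.Adj u w →
      l' s(u, w) = if (u ∈ P ∧ w ∈ P) ∨ (u ∈ Q ∧ w ∈ Q) then 0 else l s(u, w)) :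
    ∀ s t : V,
      min (spDist G l s t)
        (min (spDistToSet G l s P + spDistFromSet G l P t)
          (min (spDistToSet G l s Q + spDistFromSet G l Q t)
            (min (spDistToSet G l s P + spDistFromSet G l Q t)
              (spDistToSet G l s Q + spDistFromSet G l P t)))) ≤ spDist G l' s t := by
  have hle : ∀ e ∈ G.edgeSet, 0 ≤ l e := fun e _ => hl e
  have key : ∀ (s t : V) (p : G.Walk s t),
      min (spDist G l s t)
        (min (spDistToSet G l s P + spDistFromSet G l P t)
          (min (spDistToSet G l s Q + spDistFromSet G l Q t)
            (min (spDistToSet G l s P + spDistFromSet G l Q t)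
              (spDistToSet G l s Q + spDistFromSet G l P t)))) ≤ walkLen l' p := by
    intro s t p
    induction p with
    | nil =>
      simp only [walkLen, SimpleGraph.Walk.edges_nil, List.map_nil, List.sum_nil]
      exact le_trans (min_le_left _ _) (spDist_self_le hle _)
    | @cons u v w h q ih =>
      rw [walkLen_cons, hl' u v h]
      have cA := min_le_left (spDist G l u w)
        (min (spDistToSet G l u P + spDistFromSet G l P w)
          (min (spDistToSet G l u Q + spDistFromSet G l Q w)
            (min (spDistToSet G l u P + spDistFromSet G l Q w)
              (spDistToSet G l u Q + spDistFromSet G l P w))))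
      have cB : min (spDist G l u w)
        (min (spDistToSet G l u P + spDistFromSet G l P w)
          (min (spDistToSet G l u Q + spDistFromSet G l Q w)
            (min (spDistToSet G l u P + spDistFromSet G l Q w)
              (spDistToSet G l u Q + spDistFromSet G l P w)))) ≤
          spDistToSet G l u P + spDistFromSet G l P w :=
        le_trans (min_le_right _ _) (min_le_left _ _)
      have cC : min (spDist G l u w)
        (min (spDistToSet G l u P + spDistFromSet G l P w)
          (min (spDistToSet G l u Q + spDistFromSet G l Q w)
            (min (spDistToSet G l u P + spDistFromSet G l Q w)
              (spDistToSet G l u Q + spDistFromSet G l P w)))) ≤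
          spDistToSet G l u Q + spDistFromSet G l Q w :=
        le_trans (min_le_right _ _) (le_trans (min_le_right _ _) (min_le_left _ _))
      have cD : min (spDist G l u w)
        (min (spDistToSet G l u P + spDistFromSet G l P w)
          (min (spDistToSet G l u Q + spDistFromSet G l Q w)
            (min (spDistToSet G l u P + spDistFromSet G l Q w)
              (spDistToSet G l u Q + spDistFromSet G l P w)))) ≤
          spDistToSet G l u P + spDistFromSet G l Q w :=
        le_trans (min_le_right _ _) (le_trans (min_le_right _ _)
          (le_trans (min_le_right _ _) (min_le_left _ _)))
      have cE : min (spDist G l u w)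
        (min (spDistToSet G l u P + spDistFromSet G l P w)
          (min (spDistToSet G l u Q + spDistFromSet G l Q w)
            (min (spDistToSet G l u P + spDistFromSet G l Q w)
              (spDistToSet G l u Q + spDistFromSet G l P w)))) ≤
          spDistToSet G l u Q + spDistFromSet G l P w :=
        le_trans (min_le_right _ _) (le_trans (min_le_right _ _)
          (le_trans (min_le_right _ _) (min_le_right _ _)))
      split_ifs with hc
      · -- contracted edge: show D u w ≤ D v w, then use ih
        have hDD : min (spDist G l u w)
            (min (spDistToSet G l u P + spDistFromSet G l P w)
              (min (spDistToSet G l u Q + spDistFromSet G l Q w)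
                (min (spDistToSet G l u P + spDistFromSet G l Q w)
                  (spDistToSet G l u Q + spDistFromSet G l P w)))) ≤
            min (spDist G l v w)
              (min (spDistToSet G l v P + spDistFromSet G l P w)
                (min (spDistToSet G l v Q + spDistFromSet G l Q w)
                  (min (spDistToSet G l v P + spDistFromSet G l Q w)
                    (spDistToSet G l v Q + spDistFromSet G l P w)))) := by
          have hPv0 : 0 ≤ spDistToSet G l v P := spDistToSet_nonneg hle hG v hPne
          have hQv0 : 0 ≤ spDistToSet G l v Q := spDistToSet_nonneg hle hG v hQne
          rcases hc with ⟨huP, hvP⟩ | ⟨huQ, hvQ⟩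
          · have h0 : spDistToSet G l u P ≤ 0 := spDistToSet_le_zero hle hG huP
            have h3 : spDistFromSet G l P w ≤ spDist G l v w := spDistFromSet_le hle hG hvP w
            refine le_min ?_ (le_min ?_ (le_min ?_ (le_min ?_ ?_))) <;> linarith
          · have h0 : spDistToSet G l u Q ≤ 0 := spDistToSet_le_zero hle hG huQ
            have h3 : spDistFromSet G l Q w ≤ spDist G l v w := spDistFromSet_le hle hG hvQ w
            refine le_min ?_ (le_min ?_ (le_min ?_ (le_min ?_ ?_))) <;> linarith
        linarith
      · -- full edge
        have t1 : spDist G l u w ≤ l s(u, v) + spDist G l v w := spDist_cons_le hle hG w h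
        have t2 : spDistToSet G l u P ≤ l s(u, v) + spDistToSet G l v P :=
          spDistToSet_cons_le hle hG h hPne
        have t3 : spDistToSet G l u Q ≤ l s(u, v) + spDistToSet G l v Q :=
          spDistToSet_cons_le hle hG h hQne
        have hDD : min (spDist G l u w)
            (min (spDistToSet G l u P + spDistFromSet G l P w)
              (min (spDistToSet G l u Q + spDistFromSet G l Q w)
                (min (spDistToSet G l u P + spDistFromSet G l Q w)
                  (spDistToSet G l u Q + spDistFromSet G l P w)))) - l s(u, v) ≤
            min (spDist G l v w)
              (min (spDistToSet G l v P + spDistFromSet G l P w)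
                (min (spDistToSet G l v Q + spDistFromSet G l Q w)
                  (min (spDistToSet G l v P + spDistFromSet G l Q w)
                    (spDistToSet G l v Q + spDistFromSet G l P w)))) := by
          refine le_min ?_ (le_min ?_ (le_min ?_ (le_min ?_ ?_))) <;> linarith
        linarith
  intro s t
  obtain ⟨p⟩ := hG.preconnected s t
  refine le_csInf ⟨walkLen l' p, p, rfl⟩ ?_
  rintro x ⟨q, rfl⟩
  exact key s t q
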